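/- arXiv:1811.00824 — 3 statements merged into one kernel-verified Lean document; each statement's English description precedes it below -/
import Mathlib

section
/- In the master-problem reduction, if a feasible solution achieves value ≥ 1, then there is an optimal solution in which every cost vector c^i is a 0-1 vector: for each scenario i with assigned solutions x^{i_1},...,x^{i_p}, either there exists a coordinate s with x^{i_j}_s = 1 for all j (in which case c^i can be taken as the indicator vector of s), or two assigned solutions have disjoint supports, which contradicts sum_k c^i_k = 1 and all assigned values being ≥ 1. -/
/-!
Some coordinate `s` carries positive weight `c s`. Each `x^j` lies coordinatewise below `1`, so
`c·x^j ≤ ∑ c = 1 ≤ c·x^j`; equality in the termwise bound `c k x^j_k ≤ c k` then forces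
`x^j_s = 1`.
-/

open Finset

theorem apply_eq_one_of_sum_le_sum_mul {ι R : Type*} [Fintype ι] [Field R] [LinearOrder R]
    [IsStrictOrderedRing R] {c y : ι → R} (hc : ∀ k, 0 ≤ c k) (hy : ∀ k, y k ≤ 1)
    (h : ∑ k, c k ≤ ∑ k, c k * y k) {s : ι} (hs : 0 < c s) : y s = 1 := by
  have hle : ∀ k ∈ univ, c k * y k ≤ c k := fun k _ =>
    mul_le_of_le_one_right (hc k) (hy k)
  have heq : ∀ k ∈ univ, c k * y k = c k :=
    (sum_eq_sum_iff_of_le hle).mp (le_antisymm (sum_le_sum hle) h)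
  exact (mul_eq_left₀ hs.ne').mp (heq s (mem_univ s))

/-- If `x^1,…,x^p ∈ {0,1}^n` and `c` in the simplex satisfy `c·x^j ≥ 1` for all `j`, then
there is a coordinate `s` with `x^j_s = 1` for all `j`, and the indicator vector of `s`
also achieves value at least 1 on every `x^j`. -/
theorem stmt_10 (n p : ℕ) (x : Fin p → Fin n → ℝ) (hx : ∀ j k, x j k = 0 ∨ x j k = 1)
    (c : Fin n → ℝ) (hc : ∀ k, 0 ≤ c k ∧ c k ≤ 1) (hcs : (∑ k, c k) = 1)
    (h : ∀ j, 1 ≤ ∑ k, c k * x j k) :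
    ∃ s : Fin n, (∀ j, x j s = 1) ∧
      ∀ j, 1 ≤ ∑ k, (if k = s then (1 : ℝ) else 0) * x j k := by
  obtain ⟨s, -, hs⟩ : ∃ s ∈ univ, (0 : ℝ) < c s :=
    exists_lt_of_sum_lt (by simp [hcs])
  have hxs : ∀ j, x j s = 1 := fun j =>
    apply_eq_one_of_sum_le_sum_mul (fun k => (hc k).1)
      (fun k => by rcases hx j k with h0 | h1 <;> simp [*]) (hcs ▸ h j) hs
  refine ⟨s, hxs, fun j => ?_⟩
  simp [hxs j]
end

section
/- The midpoint solution gives an N-approximation for the min-max robust problem: if x̂ minimizes (1/N)(sum_{i∈[N]} c^i)·x over x ∈ X, with all c^i ∈ R^n_{≥0}, then max_{j∈[N]} c^j·x̂ ≤ N · min_{x∈X} max_{j∈[N]} c^j·x. -/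
/-
Each scenario cost of `x̂` is at most the total cost `∑ᵢ cⁱ·x̂` (all costs are nonnegative),
which by minimality of `x̂` is at most the total cost of a min-max optimal `x*`, and that total
is a sum of `N` scenario costs, each bounded by the max-cost of `x*`.
-/

open Finset

variable {ι α : Type*}

theorem Finset.sup'_le_sum_of_nonneg {s : Finset ι} (hs : s.Nonempty) {f : ι → ℝ}
    (hf : ∀ i ∈ s, 0 ≤ f i) : s.sup' hs f ≤ ∑ i ∈ s, f i :=
  sup'_le hs f fun _ hi => single_le_sum hf hi

theorem Finset.sum_le_card_mul_sup' {s : Finset ι} (hs : s.Nonempty) (f : ι → ℝ) :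
    ∑ i ∈ s, f i ≤ #s * s.sup' hs f := by
  simpa using sum_le_card_nsmul s f _ fun _ hi => le_sup' f hi

theorem sup'_le_card_mul_inf'_sup'_of_isMinOn_sum {s : Finset ι} (hs : s.Nonempty)
    {X : Finset α} (hX : X.Nonempty) {f : ι → α → ℝ} {a : α}
    (hf : ∀ i ∈ s, 0 ≤ f i a) (hmin : IsMinOn (fun x => ∑ i ∈ s, f i x) X a) :
    s.sup' hs (fun i => f i a) ≤ #s * X.inf' hX (fun x => s.sup' hs fun i => f i x) := by
  obtain ⟨x, hx, hx_inf⟩ := exists_mem_eq_inf' hX fun x => s.sup' hs fun i => f i x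
  rw [hx_inf]
  calc s.sup' hs (fun i => f i a)
      ≤ ∑ i ∈ s, f i a := sup'_le_sum_of_nonneg hs hf
    _ ≤ ∑ i ∈ s, f i x := hmin (mem_coe.2 hx)
    _ ≤ #s * s.sup' hs (fun i => f i x) := sum_le_card_mul_sup' hs _

theorem Finset.sum_sum_mul_comm {m n : Type*} [Fintype m] [Fintype n] (c : m → n → ℝ)
    (x : n → ℝ) : ∑ k, (∑ i, c i k) * x k = ∑ i, ∑ k, c i k * x k := by
  simp only [sum_mul]
  exact sum_comm

/-- The midpoint solution is an `N`-approximation: if `x̂` minimizes the midpoint cost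
`(1/N)(∑_i c^i)·x` over `x ∈ X ⊆ {0,1}^n` with nonnegative scenarios, then
`max_j c^j·x̂ ≤ N · min_{x∈X} max_j c^j·x`. -/
theorem stmt_17 (n N : ℕ) (hN : 0 < N) (X : Finset (Fin n → ℝ)) (hX : X.Nonempty)
    (hX01 : ∀ x ∈ X, ∀ k, x k = 0 ∨ x k = 1)
    (c : Fin N → Fin n → ℝ) (hc : ∀ i k, 0 ≤ c i k)
    (xhat : Fin n → ℝ) (hxhat : xhat ∈ X)
    (hmid : ∀ x ∈ X,
      (1 / (N : ℝ)) * (∑ k, (∑ i, c i k) * xhat k) ≤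
      (1 / (N : ℝ)) * (∑ k, (∑ i, c i k) * x k)) :
    (Finset.univ.sup' (Finset.univ_nonempty_iff.mpr ⟨⟨0, hN⟩⟩)
        fun j => ∑ k, c j k * xhat k) ≤
    (N : ℝ) * X.inf' hX (fun x =>
      Finset.univ.sup' (Finset.univ_nonempty_iff.mpr ⟨⟨0, hN⟩⟩)
        fun j => ∑ k, c j k * x k) := by
  have hxhat_nonneg (k : Fin n) : 0 ≤ xhat k := by
    rcases hX01 xhat hxhat k with h | h <;> simp [h]
  have hmin : IsMinOn (fun x => ∑ i, ∑ k, c i k * x k) X xhat := isMinOn_iff.2 fun x hx => by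
    simpa only [sum_sum_mul_comm] using
      le_of_mul_le_mul_left (hmid x hx) (by positivity : (0 : ℝ) < 1 / N)
  have := sup'_le_card_mul_inf'_sup'_of_isMinOn_sum (univ_nonempty_iff.2 ⟨⟨0, hN⟩⟩) hX
    (f := fun j x => ∑ k, c j k * x k)
    (fun j _ => sum_nonneg fun k _ => mul_nonneg (hc j k) (hxhat_nonneg k)) hmin
  rwa [card_univ, Fintype.card_fin] at this
end

section
/- In the Σ^p_2-hardness construction, for fixed signs a^i_j ∈ {−1,0,1} (for i ∈ [N], j ∈ [s]) and b^i_j ∈ {−1,0,1} (for i ∈ [N], j ∈ [t]) with exactly three nonzero signs per clause i, and fixed d ∈ {−1,1}^s, the robust value min over (y^1,y^2) ∈ {0,1}^t × {0,1}^t with y^1_j + y^2_j = 1 of max_{i∈[N]} [ sum_j a^i_j d_j + sum_j b^i_j (y^1_j − y^2_j) ] is at most 3, and it equals 3 if and only if for every β ∈ {0,1}^t there exists a clause i such that all three literals of clause i are satisfied by the assignment (α, β) where α_j = (d_j = 1) and β_j corresponds to y^1_j = 1. -/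
open Finset

/-! Each literal contributes `±1` and each clause has three literals, so every clause value lies
in `[-3, 3]`, with value `3` exactly when all three literals are satisfied. Hence every inner
maximum, and so the outer minimum, is at most `3`; the minimum equals `3` iff every inner maximum
reaches `3`, i.e. iff every assignment `y` satisfies some clause. -/

lemma abs_sum_mul_le_card_ne_zero {ι : Type*} [Fintype ι] {x e : ι → ℝ}
    (hx : ∀ j, |x j| ≤ 1) (he : ∀ j, |e j| ≤ 1) :
    |∑ j, x j * e j| ≤ #{j | x j ≠ 0} := by
  calc |∑ j, x j * e j| ≤ ∑ j, |x j * e j| := abs_sum_le_sum_abs _ _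
    _ ≤ ∑ j, if x j ≠ 0 then (1 : ℝ) else 0 := by
        refine sum_le_sum fun j _ => ?_
        split_ifs with h
        · rw [abs_mul]; exact mul_le_one₀ (hx j) (abs_nonneg _) (he j)
        · simp [not_not.mp h]
    _ = #{j | x j ≠ 0} := by rw [sum_boole]

lemma abs_le_one_of_sign {x : ℝ} (hx : x = -1 ∨ x = 0 ∨ x = 1) : |x| ≤ 1 := by
  rcases hx with rfl | rfl | rfl <;> norm_num

lemma csInf_le_and_csInf_eq_iff {S : Set ℝ} {c : ℝ} (hne : S.Nonempty) (hbdd : BddBelow S)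
    (hc : ∀ r ∈ S, r ≤ c) : sInf S ≤ c ∧ (sInf S = c ↔ ∀ r ∈ S, c ≤ r) := by
  obtain ⟨r, hr⟩ := hne
  have hle : sInf S ≤ c := (csInf_le hbdd hr).trans (hc r hr)
  refine ⟨hle, ?_⟩
  rw [← le_csInf_iff hbdd ⟨r, hr⟩]
  exact ⟨fun h => h.ge, le_antisymm hle⟩

lemma sInf_sup'_le_and_eq_iff {ι κ : Type*} [Fintype ι] (hι : (univ : Finset ι).Nonempty)
    {Y : Set κ} (hY : Y.Nonempty) {f : κ → ι → ℝ} {c : ℝ}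
    (hf : ∀ y ∈ Y, ∀ i, |f y i| ≤ c) :
    sInf {r | ∃ y ∈ Y, r = univ.sup' hι (f y)} ≤ c ∧
      (sInf {r | ∃ y ∈ Y, r = univ.sup' hι (f y)} = c ↔ ∀ y ∈ Y, ∃ i, f y i = c) := by
  obtain ⟨i₀, -⟩ := id hι
  obtain ⟨y₀, hy₀⟩ := hY
  set W := {r | ∃ y ∈ Y, r = univ.sup' hι (f y)}
  have hne : W.Nonempty := ⟨_, y₀, hy₀, rfl⟩
  have hbdd : BddBelow W := by
    refine ⟨-c, ?_⟩
    rintro _ ⟨y, hy, rfl⟩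
    exact (neg_le_of_abs_le (hf y hy i₀)).trans (le_sup' _ (mem_univ i₀))
  have hup : ∀ r ∈ W, r ≤ c := by
    rintro _ ⟨y, hy, rfl⟩
    exact sup'_le _ _ fun i _ => le_of_abs_le (hf y hy i)
  have hreach : ∀ y ∈ Y, c ≤ univ.sup' hι (f y) ↔ ∃ i, f y i = c := fun y hy => by
    simp only [le_sup'_iff, mem_univ, true_and]
    exact exists_congr fun i => ⟨fun h => le_antisymm (le_of_abs_le (hf y hy i)) h, ge_of_eq⟩
  refine (csInf_le_and_csInf_eq_iff hne hbdd hup).imp_right fun h => h.trans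
    ⟨fun H y hy => (hreach y hy).1 (H _ ⟨y, hy, rfl⟩), ?_⟩
  rintro H _ ⟨y, hy, rfl⟩
  exact (hreach y hy).2 (H y hy)

/-- In the Σ^p_2-hardness construction: for clause signs `a^i ∈ {-1,0,1}^s`,
`b^i ∈ {-1,0,1}^t` with exactly three nonzero signs per clause, and `d ∈ {-1,1}^s`, the
value `min_{y ∈ {0,1}^t} max_i [∑_j a^i_j d_j + ∑_j b^i_j (2 y_j - 1)]` is at most 3, with
equality iff for every 0-1 vector `y` some clause `i` is fully satisfied, i.e. achieves
value exactly 3. -/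
theorem stmt_18 (s t N : ℕ) (hN : 0 < N)
    (a : Fin N → Fin s → ℝ) (b : Fin N → Fin t → ℝ)
    (ha : ∀ i j, a i j = -1 ∨ a i j = 0 ∨ a i j = 1)
    (hb : ∀ i j, b i j = -1 ∨ b i j = 0 ∨ b i j = 1)
    (h3 : ∀ i, (Finset.univ.filter fun j => a i j ≠ 0).card +
      (Finset.univ.filter fun j => b i j ≠ 0).card = 3)
    (d : Fin s → ℝ) (hd : ∀ j, d j = 1 ∨ d j = -1)
    (V : (Fin t → ℝ) → Fin N → ℝ)
    (hV : ∀ y i, V y i = (∑ j, a i j * d j) + ∑ j, b i j * (2 * y j - 1))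
    (W : Set ℝ)
    (hW : W = {r : ℝ | ∃ y : Fin t → ℝ, (∀ j, y j = 0 ∨ y j = 1) ∧
      r = Finset.univ.sup' (Finset.univ_nonempty_iff.mpr ⟨⟨0, hN⟩⟩) (V y)}) :
    sInf W ≤ 3 ∧
    (sInf W = 3 ↔
      ∀ y : Fin t → ℝ, (∀ j, y j = 0 ∨ y j = 1) → ∃ i, V y i = 3) := by
  have hV3 : ∀ y : Fin t → ℝ, (∀ j, y j = 0 ∨ y j = 1) → ∀ i, |V y i| ≤ 3 := by
    intro y hy i
    have hd1 : ∀ j, |d j| ≤ 1 := fun j => by rcases hd j with h | h <;> norm_num [h]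
    have hy1 : ∀ j, |2 * y j - 1| ≤ 1 := fun j => by rcases hy j with h | h <;> norm_num [h]
    have hcard : (#{j | a i j ≠ 0} : ℝ) + #{j | b i j ≠ 0} = 3 := by exact_mod_cast h3 i
    rw [hV, ← hcard]
    exact (abs_add_le _ _).trans <| add_le_add
      (abs_sum_mul_le_card_ne_zero (fun j => abs_le_one_of_sign (ha i j)) hd1)
      (abs_sum_mul_le_card_ne_zero (fun j => abs_le_one_of_sign (hb i j)) hy1)
  subst hW
  exact sInf_sup'_le_and_eq_iff _ (Y := {y : Fin t → ℝ | ∀ j, y j = 0 ∨ y j = 1})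
    ⟨0, fun _ => Or.inl rfl⟩ hV3
end
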